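/- arXiv:2306.09856 — 4 statements merged into one kernel-verified Lean document; each statement's English description precedes it below -/
import Mathlib

section
/- For any real polynomial P of degree at most 3 and any h > 0, the average of P over [x - h/2, x + h/2] equals (1/24) · (13·(P(x - h/2) + P(x + h/2)) - (P(x - 3h/2) + P(x + 3h/2))). -/
/-!
Both sides are linear in the coefficients of `P`, so it suffices that they agree on the monomials
of degree at most three. Expanding around the cell centre `x`, both reduce to
`P x + h ^ 2 * P'' x / 24`: the odd Taylor terms cancel by symmetry, and
`13 * (h / 2) ^ 2 - (3 * h / 2) ^ 2 = h ^ 2`.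
-/

open Finset Polynomial

theorem Polynomial.integral_eval_eq_sum_range {p : ℝ[X]} {n : ℕ} (hn : p.natDegree < n)
    (a b : ℝ) :
    ∫ t in a..b, p.eval t = ∑ i ∈ range n, p.coeff i * ((b ^ (i + 1) - a ^ (i + 1)) / (i + 1)) := by
  simp_rw [eval_eq_sum_range' hn]
  rw [intervalIntegral.integral_finsetSum fun i _ =>
    ((continuous_pow i).const_mul (p.coeff i)).intervalIntegrable a b]
  simp only [intervalIntegral.integral_const_mul, integral_pow]

theorem stmt_1 (P : Polynomial ℝ) (hP : P.degree ≤ 3) (x h : ℝ) (hh : 0 < h) :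
    (1 / h) * ∫ t in (x - h / 2)..(x + h / 2), P.eval t =
      (1 / 24) * (13 * (P.eval (x - h / 2) + P.eval (x + h / 2))
        - (P.eval (x - 3 * h / 2) + P.eval (x + 3 * h / 2))) := by
  have hn : P.natDegree < 4 := Nat.lt_succ_of_le (natDegree_le_of_degree_le hP)
  rw [integral_eval_eq_sum_range hn]
  simp only [eval_eq_sum_range' hn, sum_range_succ, sum_range_zero]
  field_simp [hh.ne']
  ring
end

section
/- For any real polynomial P of degree at most 5 and any h > 0, the average of P over [x - h/2, x + h/2] equals (1/1440) · (802·(P(x - h/2) + P(x + h/2)) - 93·(P(x - 3h/2) + P(x + 3h/2)) + 11·(P(x - 5h/2) + P(x + 5h/2))). -/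
/-!
Both the cell average and the face-value rule are linear in the integrand, so it suffices to check
that the rule is exact on the monomials `t ^ i` for `i ≤ 5`; for each of them this is a polynomial
identity in `x` and `h` once the integral is computed.
-/

open Polynomial Finset

noncomputable def cellAverage (f : ℝ → ℝ) (x h : ℝ) : ℝ :=
  (1 / h) * ∫ t in (x - h / 2)..(x + h / 2), f t

noncomputable def faceValueRule (f : ℝ → ℝ) (x h : ℝ) : ℝ :=
  (1 / 1440) * (802 * (f (x - h / 2) + f (x + h / 2))
    - 93 * (f (x - 3 * h / 2) + f (x + 3 * h / 2))
    + 11 * (f (x - 5 * h / 2) + f (x + 5 * h / 2)))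

theorem cellAverage_sum_mul_pow (s : Finset ℕ) (c : ℕ → ℝ) (x h : ℝ) :
    cellAverage (fun t => ∑ i ∈ s, c i * t ^ i) x h
      = ∑ i ∈ s, c i * cellAverage (· ^ i) x h := by
  rw [cellAverage, intervalIntegral.integral_finsetSum
    fun i _ => (intervalIntegral.intervalIntegrable_pow i).const_mul _, mul_sum]
  refine sum_congr rfl fun i _ => ?_
  rw [intervalIntegral.integral_const_mul, cellAverage]
  ring

theorem faceValueRule_sum_mul_pow (s : Finset ℕ) (c : ℕ → ℝ) (x h : ℝ) :
    faceValueRule (fun t => ∑ i ∈ s, c i * t ^ i) x h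
      = ∑ i ∈ s, c i * faceValueRule (· ^ i) x h := by
  simp only [faceValueRule, mul_sum, ← sum_add_distrib, ← sum_sub_distrib]
  refine sum_congr rfl fun i _ => ?_
  ring

theorem cellAverage_pow_eq_faceValueRule {i : ℕ} (hi : i ≤ 5) (x : ℝ) {h : ℝ} (hh : h ≠ 0) :
    cellAverage (· ^ i) x h = faceValueRule (· ^ i) x h := by
  rw [cellAverage, integral_pow, faceValueRule]
  interval_cases i <;> field_simp <;> ring

theorem cellAverage_eq_faceValueRule {P : ℝ[X]} (hP : P.degree ≤ 5) (x : ℝ) {h : ℝ} (hh : h ≠ 0) :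
    cellAverage P.eval x h = faceValueRule P.eval x h := by
  have hlt : P.natDegree < 6 := Nat.lt_succ_of_le (natDegree_le_iff_degree_le.mpr hP)
  have heval : P.eval = fun t => ∑ i ∈ range 6, P.coeff i * t ^ i :=
    funext (eval_eq_sum_range' hlt)
  rw [heval, cellAverage_sum_mul_pow, faceValueRule_sum_mul_pow]
  exact sum_congr rfl fun i hi =>
    congrArg _ (cellAverage_pow_eq_faceValueRule (Nat.lt_succ_iff.mp (mem_range.mp hi)) x hh)

theorem stmt_2 (P : Polynomial ℝ) (hP : P.degree ≤ 5) (x h : ℝ) (hh : 0 < h) :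
    (1 / h) * ∫ t in (x - h / 2)..(x + h / 2), P.eval t =
      (1 / 1440) * (802 * (P.eval (x - h / 2) + P.eval (x + h / 2))
        - 93 * (P.eval (x - 3 * h / 2) + P.eval (x + 3 * h / 2))
        + 11 * (P.eval (x - 5 * h / 2) + P.eval (x + 5 * h / 2))) :=
  cellAverage_eq_faceValueRule hP x hh.ne'
end

section
/- For any bivariate real polynomial Q of total degree at most 3 and any hx, hy > 0, the cell average (1/(hx·hy))∫_{-hy/2}^{hy/2}∫_{-hx/2}^{hx/2} Q(x, y) dx dy equals (5/6)·Q(0,0) + (1/24)·(Q(hx, 0) + Q(-hx, 0) + Q(0, hy) + Q(0, -hy)). -/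
/-! The cell average and the five-point rule are both linear in `Q`, so it suffices to compare
them on the monomials `x ^ a * y ^ b` with `a + b ≤ 3`. On a monomial the cell integral
factors into two one-dimensional moments; the odd moments vanish, and the rule reproduces the
second moments `hx ^ 2 / 12`, `hy ^ 2 / 12` thanks to the weight `1 / 24` on the `± h` nodes. -/

open MvPolynomial intervalIntegral

lemma MvPolynomial.eval_fin_two_eq_sum {R : Type*} [CommSemiring R]
    (Q : MvPolynomial (Fin 2) R) (x y : R) :
    eval ![x, y] Q = ∑ d ∈ Q.support, coeff d Q * (x ^ d 0 * y ^ d 1) := by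
  simp [eval_eq', Fin.prod_univ_two]

lemma MvPolynomial.add_le_totalDegree_of_mem_support {R : Type*} [CommSemiring R]
    {Q : MvPolynomial (Fin 2) R} {d : Fin 2 →₀ ℕ} (hd : d ∈ Q.support) :
    d 0 + d 1 ≤ Q.totalDegree := by
  simpa [Finsupp.sum_fintype, Fin.sum_univ_two] using le_totalDegree hd

lemma intervalIntegral.integral_integral_finsetSum {ι : Type*} (s : Finset ι)
    (F : ι → ℝ → ℝ → ℝ) (hF : ∀ i ∈ s, Continuous (Function.uncurry (F i))) (a b c d : ℝ) :
    ∫ y in c..d, ∫ x in a..b, ∑ i ∈ s, F i x y = ∑ i ∈ s, ∫ y in c..d, ∫ x in a..b, F i x y := by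
  have hF' : ∀ i ∈ s, Continuous fun p : ℝ × ℝ ↦ F i p.2 p.1 := fun i hi ↦
    (hF i hi).comp continuous_swap
  rw [← integral_finsetSum]
  · refine integral_congr fun y _ ↦ integral_finsetSum fun i hi ↦ ?_
    exact ((hF' i hi).comp (Continuous.prodMk_right y)).intervalIntegrable _ _
  · intro i hi
    exact (continuous_parametric_intervalIntegral_of_continuous' (hF' i hi) a b).intervalIntegrable
      _ _

lemma intervalIntegral.integral_integral_mul (f g : ℝ → ℝ) (a b c d : ℝ) :
    ∫ y in c..d, ∫ x in a..b, f x * g y = (∫ x in a..b, f x) * ∫ y in c..d, g y := by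
  simp only [integral_mul_const, integral_const_mul]

lemma integral_integral_eval_fin_two (Q : MvPolynomial (Fin 2) ℝ) (a b c d : ℝ) :
    ∫ y in c..d, ∫ x in a..b, eval ![x, y] Q =
      ∑ m ∈ Q.support, coeff m Q * ((∫ x in a..b, x ^ m 0) * ∫ y in c..d, y ^ m 1) := by
  simp only [eval_fin_two_eq_sum]
  rw [integral_integral_finsetSum _ _ fun m _ ↦ by fun_prop]
  refine Finset.sum_congr rfl fun m _ ↦ ?_
  simp only [← mul_assoc, integral_integral_mul, integral_const_mul]

lemma cellAverage_monomial (hx hy : ℝ) (hhx : hx ≠ 0) (hhy : hy ≠ 0) (a b : ℕ)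
    (hab : a + b ≤ 3) :
    1 / (hx * hy) *
        ((∫ x in (-(hx / 2))..(hx / 2), x ^ a) * ∫ y in (-(hy / 2))..(hy / 2), y ^ b) =
      5 / 6 * ((0 : ℝ) ^ a * (0 : ℝ) ^ b) +
        1 / 24 * (hx ^ a * (0 : ℝ) ^ b + (-hx) ^ a * (0 : ℝ) ^ b +
          (0 : ℝ) ^ a * hy ^ b + (0 : ℝ) ^ a * (-hy) ^ b) := by
  rw [integral_pow, integral_pow]
  have ha : a ≤ 3 := by omega
  have hb : b ≤ 3 := by omega
  interval_cases a <;> interval_cases b <;> first | omega | (field_simp; ring)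

theorem stmt_10 (Q : MvPolynomial (Fin 2) ℝ) (hQ : Q.totalDegree ≤ 3)
    (hx hy : ℝ) (hhx : 0 < hx) (hhy : 0 < hy) :
    (1 / (hx * hy)) *
      (∫ y in (-(hy / 2))..(hy / 2), ∫ x in (-(hx / 2))..(hx / 2),
        MvPolynomial.eval ![x, y] Q) =
      (5 / 6) * MvPolynomial.eval ![0, 0] Q
        + (1 / 24) * (MvPolynomial.eval ![hx, 0] Q + MvPolynomial.eval ![-hx, 0] Q
          + MvPolynomial.eval ![0, hy] Q + MvPolynomial.eval ![0, -hy] Q) := by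
  rw [integral_integral_eval_fin_two]
  simp only [eval_fin_two_eq_sum, Finset.mul_sum, ← Finset.sum_add_distrib]
  refine Finset.sum_congr rfl fun m hm ↦ ?_
  have hdeg := (add_le_totalDegree_of_mem_support hm).trans hQ
  rw [mul_left_comm, cellAverage_monomial hx hy hhx.ne' hhy.ne' _ _ hdeg]
  ring
end

section
/- For any trivariate real polynomial Q of total degree at most 3, denoting V̄_{ijk} the average of Q over the box centered at (i·hx, j·hy, k·hz) with side lengths hx, hy, hz, one has Q(0,0,0) = (5/4)·V̄_{000} - (1/24)·(V̄_{100} + V̄_{-1,0,0} + V̄_{010} + V̄_{0,-1,0} + V̄_{001} + V̄_{0,0,-1}). -/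
/-!
Both sides are linear in `Q`, and the average of a monomial `x^a y^b z^c` over a box is the
product of the one-dimensional cell averages of `t^a`, `t^b`, `t^c`. For `n ≤ 3` the average of
`t^n` over `[i h - h/2, i h + h/2]` is `1`, `i h`, `i² h² + h² / 12`, `i³ h³ + i h³ / 4`.
Writing the right-hand side as `V̄₀₀₀ - (1/24) Σ (V̄₊ + V̄₋ - 2 V̄₀₀₀)` over the three directions,
the second difference of the cell averages is `2 h²` on `t²` and `0` on `1, t, t³`, so the
correction removes exactly the `h² / 12` by which the centred average of `t²` overshoots its
point value. What remains is a finite check over the exponents with `a + b + c ≤ 3`.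
-/

open MvPolynomial

noncomputable def cellMoment (h : ℝ) (i : ℤ) (n : ℕ) : ℝ :=
  (1 / h) * ∫ t in (i * h - h / 2)..(i * h + h / 2), t ^ n

theorem cellMoment_eq (h : ℝ) (i : ℤ) (n : ℕ) :
    cellMoment h i n =
      ((i * h + h / 2) ^ (n + 1) - (i * h - h / 2) ^ (n + 1)) / ((n + 1) * h) := by
  rw [cellMoment, integral_pow]
  field_simp

section CellMoment

variable {h : ℝ} (hh : h ≠ 0) (i : ℤ)
include hh

theorem cellMoment_zero : cellMoment h i 0 = 1 := by
  rw [cellMoment_eq]; field_simp; ring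

theorem cellMoment_one : cellMoment h i 1 = i * h := by
  rw [cellMoment_eq]; field_simp; ring

theorem cellMoment_two : cellMoment h i 2 = i ^ 2 * h ^ 2 + h ^ 2 / 12 := by
  rw [cellMoment_eq]; field_simp; ring

theorem cellMoment_three : cellMoment h i 3 = i ^ 3 * h ^ 3 + i * h ^ 3 / 4 := by
  rw [cellMoment_eq]; field_simp; ring

end CellMoment

theorem eval_fin_three_eq_sum {R : Type*} [CommSemiring R] (Q : MvPolynomial (Fin 3) R)
    (x y z : R) :
    eval ![x, y, z] Q = ∑ m ∈ Q.support, coeff m Q * (x ^ m 0 * y ^ m 1 * z ^ m 2) := by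
  simp [eval_eq', Fin.prod_univ_three, mul_assoc]

theorem exponent_sum_le_totalDegree {R : Type*} [CommSemiring R] {Q : MvPolynomial (Fin 3) R}
    {m : Fin 3 →₀ ℕ} (hm : m ∈ Q.support) : m 0 + m 1 + m 2 ≤ Q.totalDegree := by
  have hsum : (m.sum fun _ e => e) = m 0 + m 1 + m 2 := by
    rw [Finsupp.sum_fintype _ _ fun _ => rfl, Fin.sum_univ_three]
  exact hsum ▸ le_totalDegree hm

theorem integral_box_eval (Q : MvPolynomial (Fin 3) ℝ) (a b c d e f : ℝ) :
    ∫ z in e..f, ∫ y in c..d, ∫ x in a..b, eval ![x, y, z] Q =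
      ∑ m ∈ Q.support, coeff m Q * ((∫ x in a..b, x ^ m 0) * (∫ y in c..d, y ^ m 1) *
        ∫ z in e..f, z ^ m 2) := by
  simp (disch := exact fun _ _ => (Continuous.intervalIntegrable (by fun_prop) _ _)) only
    [eval_fin_three_eq_sum, intervalIntegral.integral_finsetSum,
      intervalIntegral.integral_const_mul, intervalIntegral.integral_mul_const]

theorem boxAverage_eval (Q : MvPolynomial (Fin 3) ℝ) (hx hy hz : ℝ) (i j k : ℤ) :
    (1 / (hx * hy * hz)) *
      ∫ z in (k * hz - hz / 2)..(k * hz + hz / 2),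
        ∫ y in (j * hy - hy / 2)..(j * hy + hy / 2),
          ∫ x in (i * hx - hx / 2)..(i * hx + hx / 2), eval ![x, y, z] Q =
      ∑ m ∈ Q.support, coeff m Q *
        (cellMoment hx i (m 0) * cellMoment hy j (m 1) * cellMoment hz k (m 2)) := by
  rw [integral_box_eval, Finset.mul_sum]
  refine Finset.sum_congr rfl fun m _ => ?_
  simp only [cellMoment, one_div, mul_inv]
  ring

noncomputable def pointValueStencil (V : ℤ → ℤ → ℤ → ℝ) : ℝ :=
  (5 / 4) * V 0 0 0 - (1 / 24) * (V 1 0 0 + V (-1) 0 0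
    + V 0 1 0 + V 0 (-1) 0 + V 0 0 1 + V 0 0 (-1))

theorem pointValueStencil_sum {ι : Type*} (s : Finset ι) (c : ι → ℝ)
    (V : ι → ℤ → ℤ → ℤ → ℝ) :
    pointValueStencil (fun i j k => ∑ m ∈ s, c m * V m i j k) =
      ∑ m ∈ s, c m * pointValueStencil (V m) := by
  simp only [pointValueStencil, Finset.mul_sum, ← Finset.sum_add_distrib,
    ← Finset.sum_sub_distrib]
  exact Finset.sum_congr rfl fun m _ => by ring

theorem pointValueStencil_cellMoment {hx hy hz : ℝ} (hx0 : hx ≠ 0) (hy0 : hy ≠ 0)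
    (hz0 : hz ≠ 0) {a b c : ℕ} (habc : a + b + c ≤ 3) :
    pointValueStencil (fun i j k => cellMoment hx i a * cellMoment hy j b * cellMoment hz k c) =
      0 ^ a * 0 ^ b * 0 ^ c := by
  have ha : a ≤ 3 := by omega
  have hb : b ≤ 3 := by omega
  have hc : c ≤ 3 := by omega
  interval_cases a <;> interval_cases b <;> interval_cases c <;> (try omega) <;>
    simp only [pointValueStencil, cellMoment_zero, cellMoment_one, cellMoment_two,
      cellMoment_three, hx0, hy0, hz0, ne_eq, not_false_eq_true] <;> push_cast <;> ring

theorem stmt_13 (Q : MvPolynomial (Fin 3) ℝ) (hQ : Q.totalDegree ≤ 3)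
    (hx hy hz : ℝ) (hhx : 0 < hx) (hhy : 0 < hy) (hhz : 0 < hz)
    (Vbar : ℤ → ℤ → ℤ → ℝ)
    (hVbar : ∀ i j k : ℤ, Vbar i j k = (1 / (hx * hy * hz)) *
      ∫ z in (k * hz - hz / 2)..(k * hz + hz / 2),
        ∫ y in (j * hy - hy / 2)..(j * hy + hy / 2),
          ∫ x in (i * hx - hx / 2)..(i * hx + hx / 2), MvPolynomial.eval ![x, y, z] Q) :
    MvPolynomial.eval ![0, 0, 0] Q =
      (5 / 4) * Vbar 0 0 0 - (1 / 24) * (Vbar 1 0 0 + Vbar (-1) 0 0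
        + Vbar 0 1 0 + Vbar 0 (-1) 0 + Vbar 0 0 1 + Vbar 0 0 (-1)) := by
  have hV : Vbar = fun i j k => ∑ m ∈ Q.support, coeff m Q *
      (cellMoment hx i (m 0) * cellMoment hy j (m 1) * cellMoment hz k (m 2)) :=
    funext₃ fun i j k => (hVbar i j k).trans (boxAverage_eval Q hx hy hz i j k)
  change _ = pointValueStencil Vbar
  rw [hV, pointValueStencil_sum, eval_fin_three_eq_sum]
  refine Finset.sum_congr rfl fun m hm => ?_
  rw [pointValueStencil_cellMoment hhx.ne' hhy.ne' hhz.ne'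
    ((exponent_sum_le_totalDegree hm).trans hQ)]
end
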